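/- Let S be a surface (a connected Hausdorff topological 2-manifold), f : S → S a homeomorphism, and U ⊆ S an open simply connected f-invariant set with S∖U having more than one point. Suppose there exist a compact set K ⊆ U and an f-invariant Borel measure μ on S (not necessarily finite) such that μ(U∖K) < ∞ and μ(D) > 0 for every cross-section D of U in S. Then f is ∂-nonwandering in U. -/

import Mathlib

open Set Topology Filter

noncomputable section

universe u

variable {X : Type u} [TopologicalSpace X]

/-- A homeomorphism is *orientation preserving* if it is isotopic to the identity. -/
def IsOrientationPreserving (f : X ≃ₜ X) : Prop :=
  ∃ H : unitInterval × X → X,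
    Continuous H ∧ (∀ x, H (0, x) = x) ∧ (∀ x, H (1, x) = f x) ∧
      ∀ t : unitInterval, IsHomeomorph fun x => H (t, x)

/-- `D` is a connected component of `A`. -/
def IsCompOf (A D : Set X) : Prop := ∃ x ∈ A, D = connectedComponentIn A x

/-- `A` has exactly two connected components, the distinct sets `D₁` and `D₂`. -/
def HasTwoComps (A D₁ D₂ : Set X) : Prop :=
  IsCompOf A D₁ ∧ IsCompOf A D₂ ∧ D₁ ≠ D₂ ∧
    ∀ x ∈ A, connectedComponentIn A x = D₁ ∨ connectedComponentIn A x = D₂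

/-- A *cross-cut* of the open set `U`: the image of an arc `g` on `(0,1)`, where `g` is
continuous and injective on `[0,1]`'s interior, runs inside `U`, has endpoints on `∂U`, and
separates `U` into exactly two components, each with a boundary point on `∂U` away from the
closed arc. -/
def IsCrossCut (U γ : Set X) : Prop :=
  ∃ g : ℝ → X,
    ContinuousOn g (Icc 0 1) ∧ InjOn g (Ioo 0 1) ∧ (∀ t ∈ Ioo (0:ℝ) 1, g t ∈ U) ∧
      g 0 ∈ frontier U ∧ g 1 ∈ frontier U ∧ γ = g '' Ioo 0 1 ∧
      ∃ D₁ D₂ : Set X, HasTwoComps (U \ γ) D₁ D₂ ∧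
        (frontier D₁ ∩ (frontier U \ g '' Icc 0 1)).Nonempty ∧
        (frontier D₂ ∩ (frontier U \ g '' Icc 0 1)).Nonempty

/-- A *cross-section* of `U`: a connected component of `U ∖ γ` for a cross-cut `γ`. -/
def IsCrossSection (U D : Set X) : Prop := ∃ γ : Set X, IsCrossCut U γ ∧ IsCompOf (U \ γ) D

/-- The image of a set under the `k`-th integer iterate of a homeomorphism. -/
def iterZ (f : X ≃ₜ X) (k : ℤ) (A : Set X) : Set X := ⇑(f.toEquiv ^ k) '' A

/-- A cross-section of `U` which is wandering for `f^n`. -/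
def IsWanderingSection (f : X ≃ₜ X) (U : Set X) (n : ℕ) (D : Set X) : Prop :=
  IsCrossSection U D ∧ ∀ k : ℤ, k ≠ 0 → iterZ f ((n : ℤ) * k) D ∩ D = ∅

/-- `f` is ∂-nonwandering in `U`. -/
def BdNonwandering (f : X ≃ₜ X) (U : Set X) : Prop :=
  ∀ n : ℕ, 1 ≤ n → ∃ K : Set X, IsCompact K ∧ K ⊆ U ∧
    ∀ D : Set X, IsWanderingSection f U n D →
      (∃ k : ℤ, 0 < k ∧ (iterZ f ((n : ℤ) * k) D ∩ K).Nonempty) ∧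
      (∃ k : ℤ, k < 0 ∧ (iterZ f ((n : ℤ) * k) D ∩ K).Nonempty)

/-- The boundary of `D` inside `U` (for `D` open in `U`). -/
def bdIn (U D : Set X) : Set X := (closure D \ D) ∩ U

/-- A chain of cross-sections of `U`. -/
def IsPEChain (U : Set X) (D : ℕ → Set X) : Prop :=
  (∀ i, IsCrossSection U (D i)) ∧ (∀ i j : ℕ, j ≤ i → D i ⊆ D j) ∧
    ∀ i j : ℕ, i ≠ j → closure (bdIn U (D i)) ∩ closure (bdIn U (D j)) = ∅

/-- The chain `D` divides the cross-section `E`. -/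
def ChainDividesSection (D : ℕ → Set X) (E : Set X) : Prop := ∃ N : ℕ, ∀ i, N ≤ i → D i ⊆ E

/-- The chain `D` divides the chain `D'`. -/
def ChainDivides (D D' : ℕ → Set X) : Prop := ∀ n : ℕ, ∃ m : ℕ, D m ⊆ D' n

/-- A prime chain: a chain dividing every chain that divides it. -/
def IsPrimeChain (U : Set X) (D : ℕ → Set X) : Prop :=
  IsPEChain U D ∧ ∀ D' : ℕ → Set X, IsPEChain U D' → ChainDivides D' D → ChainDivides D D'

/-- The type of prime chains of `U`. -/
def PrimeChain (U : Set X) : Type u := {D : ℕ → Set X // IsPrimeChain U D}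

/-- A prime end of `U`: an equivalence class of prime chains. -/
def PrimeEnd (U : Set X) : Type u :=
  Quot fun C C' : PrimeChain U => ChainDivides C.1 C'.1 ∧ ChainDivides C'.1 C.1

/-- The prime end `p` divides the cross-section `E`. -/
def PrimeEndDivides {U : Set X} (p : PrimeEnd U) (E : Set X) : Prop :=
  ∃ C : PrimeChain U, Quot.mk _ C = p ∧ ChainDividesSection C.1 E

/-- The prime ends compactification of `U` (as a set: `U ⊔ (prime ends)`). -/
def PrimeEndComp (U : Set X) : Type u := ↥U ⊕ PrimeEnd U

/-- A point of `U`, as an element of the prime ends compactification. -/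
def pePt (U : Set X) (x : ↥U) : PrimeEndComp U := Sum.inl x

/-- A prime end, as an element of the prime ends compactification. -/
def peEnd (U : Set X) (p : PrimeEnd U) : PrimeEndComp U := Sum.inr p

/-- The copy of a subset `V ⊆ U` inside the prime ends compactification. -/
def peOpen (U V : Set X) : Set (PrimeEndComp U) := {z | ∃ x : ↥U, z = pePt U x ∧ (x : X) ∈ V}

/-- The basic set `E ∪ i_E(E)` of the prime ends compactification, for a cross-section `E`. -/
def peSection (U E : Set X) : Set (PrimeEndComp U) :=
  peOpen U E ∪ {z | ∃ p : PrimeEnd U, z = peEnd U p ∧ PrimeEndDivides p E}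

/-- The topology of the prime ends compactification. -/
instance primeEndCompTopology (U : Set X) : TopologicalSpace (PrimeEndComp U) :=
  TopologicalSpace.generateFrom
    ({s | ∃ V : Set X, IsOpen V ∧ V ⊆ U ∧ s = peOpen U V} ∪
      {s | ∃ E : Set X, IsCrossSection U E ∧ s = peSection U E})

/-- The circle of prime ends, as a subset of the prime ends compactification. -/
def PrimeEndCircle (U : Set X) : Set (PrimeEndComp U) := Set.range (peEnd U)

/-- `F` is an extension of `f|_U` to the prime ends compactification of `U`. -/
def IsPEExtension (f : X ≃ₜ X) (U : Set X) (F : PrimeEndComp U ≃ₜ PrimeEndComp U) : Prop :=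
  ∀ (x : X) (hx : x ∈ U) (hfx : f x ∈ U), F (pePt U ⟨x, hx⟩) = pePt U ⟨f x, hfx⟩

/-- An end-cut of `U`: an injective arc in `U` defined on `[0,1)` converging in the ambient
space as `t → 1⁻`. -/
def IsEndCut (U : Set X) (γ : ℝ → X) : Prop :=
  ContinuousOn γ (Ico 0 1) ∧ InjOn γ (Ico 0 1) ∧ (∀ t ∈ Ico (0:ℝ) 1, γ t ∈ U) ∧
    ∃ z : X, Tendsto γ (𝓝[<] (1:ℝ)) (𝓝 z)

/-- `z` is an accessible point of `∂U`. -/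
def IsAccessiblePoint (U : Set X) (z : X) : Prop :=
  ∃ γ : ℝ → X, IsEndCut U γ ∧ Tendsto γ (𝓝[<] (1:ℝ)) (𝓝 z)

/-- `p` is an accessible prime end of `U`. -/
def IsAccessiblePrimeEnd (U : Set X) (p : PrimeEnd U) : Prop :=
  ∃ (γ : ℝ → X) (hγ : ∀ t ∈ Ico (0:ℝ) 1, γ t ∈ U), IsEndCut U γ ∧
    Tendsto (fun t : ↥(Ico (0:ℝ) 1) => pePt U ⟨γ ↑t, hγ ↑t t.2⟩)
      (comap Subtype.val (𝓝[<] (1:ℝ))) (𝓝 (peEnd U p))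

/-- A translation arc for `f` based at `x`: a simple arc from `x` to `f x` meeting its image
only as allowed. -/
def IsTranslationArc (f : X ≃ₜ X) (γ : Set X) (x : X) : Prop :=
  f x ≠ x ∧
    ∃ g : ℝ → X, ContinuousOn g (Icc 0 1) ∧ InjOn g (Icc 0 1) ∧
      g 0 = x ∧ g 1 = f x ∧ γ = g '' Icc 0 1 ∧
      ((⇑f '' γ) ∩ γ = {f x} ∨ ((⇑f '' γ) ∩ γ = {x, f x} ∧ f (f x) = x))

/-- An `N`-translation arc for `f` based at `x` (for `N = 1` this is just a translation arc). -/
def IsNTranslationArc (f : X ≃ₜ X) (N : ℕ) (γ : Set X) (x : X) : Prop :=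
  IsTranslationArc f γ x ∧
    (2 ≤ N →
      (∀ k : ℕ, 2 ≤ k → k ≤ N - 1 → (⇑f)^[k] '' γ ∩ γ = ∅) ∧
        ((⇑f)^[N] '' γ ∩ γ = ∅ ∨ ((⇑f)^[N] '' γ ∩ γ = {x} ∧ (⇑f)^[N + 1] x = x)))

/-- An ∞-translation arc: an `N`-translation arc for every `N ≥ 1`. -/
def IsInfTranslationArc (f : X ≃ₜ X) (γ : Set X) (x : X) : Prop :=
  ∀ N : ℕ, 1 ≤ N → IsNTranslationArc f N γ x

/-- A nonwandering homeomorphism. -/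
def IsNonwanderingMap (f : X → X) : Prop :=
  ∀ V : Set X, IsOpen V → V.Nonempty → ∃ n : ℕ, 1 ≤ n ∧ (f^[n] '' V ∩ V).Nonempty

/-- A loop contained in `A` which is not null-homotopic in `V`. -/
def IsEssentialLoopIn (V A : Set X) : Prop :=
  ∃ (z : ↥V) (δ : Path z z), (∀ t : unitInterval, (↑(δ t) : X) ∈ A) ∧
    ¬ δ.Homotopic (Path.refl z)

/-- An annular continuum: a continuum with an open annular neighborhood `V` such that `V ∖ K`
has exactly two components, each essential in `V`. -/
def IsAnnularContinuum (K : Set X) : Prop :=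
  IsCompact K ∧ IsConnected K ∧ K.Nontrivial ∧
    ∃ V : Set X, IsOpen V ∧ K ⊆ V ∧
      Nonempty (↥V ≃ₜ AddCircle (1 : ℝ) × ↥(Ioo (0 : ℝ) 1)) ∧
      ∃ D₁ D₂ : Set X, HasTwoComps (V \ K) D₁ D₂ ∧
        IsEssentialLoopIn V D₁ ∧ IsEssentialLoopIn V D₂

/-- A set contractible in the ambient surface: it has an open neighborhood homeomorphic to the
plane. -/
def ContractibleInSurface (K : Set X) : Prop :=
  ∃ W : Set X, IsOpen W ∧ K ⊆ W ∧ Nonempty (↥W ≃ₜ (ℝ × ℝ))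

/-- `α ∈ ℝ/ℤ` is rational. -/
def IsRationalAC (α : AddCircle (1 : ℝ)) : Prop := ∃ r : ℚ, α = ((r : ℝ) : AddCircle (1 : ℝ))

/-- The constant `q(α,g)`: the smallest positive integer `q` with `‖qα‖ = 0` if `α` is
rational, and `(2g+1)‖qα‖ < ‖α‖` if `α` is irrational. -/
def qConst (α : AddCircle (1 : ℝ)) (g : ℕ) : ℕ :=
  sInf {q : ℕ | 0 < q ∧
    ((IsRationalAC α ∧ ‖q • α‖ = 0) ∨
      (¬IsRationalAC α ∧ ((2 * g + 1 : ℕ) : ℝ) * ‖q • α‖ < ‖α‖))}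

/-!
A cross-section `D` is open, hence measurable, and has positive measure. If it is
`f^n`-wandering, its iterates `f^{nk}(D)` are pairwise disjoint, all of measure `μ D`, and lie
in `U`. Those missing `K` lie in `U ∖ K`, which has finite measure, so there are only finitely
many of them: infinitely many positive and infinitely many negative iterates meet `K`.
-/

namespace Equiv.Perm

open MeasureTheory

theorem measurePreserving_zpow {α : Type*} [MeasurableSpace α] {μ : Measure α} {e : Perm α}
    (he : MeasurePreserving e μ μ) (he' : MeasurePreserving e.symm μ μ) (k : ℤ) :
    MeasurePreserving ⇑(e ^ k) μ μ := by
  obtain ⟨k, rfl | rfl⟩ := k.eq_nat_or_neg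
  · rw [zpow_natCast, ← iterate_eq_pow]
    exact he.iterate k
  · rw [zpow_neg, zpow_natCast, ← inv_pow, ← iterate_eq_pow]
    exact he'.iterate k

end Equiv.Perm

theorem iterZ_add (f : X ≃ₜ X) (j k : ℤ) (A : Set X) :
    iterZ f (j + k) A = iterZ f j (iterZ f k A) := by
  rw [iterZ, iterZ, iterZ, zpow_add, Equiv.Perm.coe_mul, image_comp]

theorem iterZ_eq_preimage (f : X ≃ₜ X) (k : ℤ) (A : Set X) :
    iterZ f k A = ⇑(f.toEquiv ^ (-k)) ⁻¹' A := by
  rw [iterZ, Equiv.image_eq_preimage_symm, zpow_neg, Equiv.Perm.inv_def]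

open Pointwise in
theorem iterZ_subset_of_image_eq {f : X ≃ₜ X} {U A : Set X} (hU : ⇑f '' U = U) (hA : A ⊆ U)
    (k : ℤ) : iterZ f k A ⊆ U := by
  have hf : f.toEquiv ∈ MulAction.stabilizer (Equiv.Perm X) U := hU
  have hfk : f.toEquiv ^ k • U = U := (MulAction.stabilizer _ U).zpow_mem hf k
  rw [← hfk]
  exact image_mono hA

theorem pairwise_disjoint_iterZ_mul {f : X ≃ₜ X} {A : Set X} {m : ℤ}
    (hA : ∀ k : ℤ, k ≠ 0 → iterZ f (m * k) A ∩ A = ∅) :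
    Pairwise (Function.onFun Disjoint fun k : ℤ => iterZ f (m * k) A) := by
  intro a b hab
  have hsplit : iterZ f (m * a) A = iterZ f (m * b) (iterZ f (m * (a - b)) A) := by
    rw [← iterZ_add]
    ring_nf
  rw [Function.onFun, hsplit]
  unfold iterZ
  rw [disjoint_image_iff (f.toEquiv ^ (m * b)).injective, disjoint_iff_inter_eq_empty]
  exact hA (a - b) (sub_ne_zero.mpr hab)

theorem IsCrossCut.isOpen_diff [T2Space X] {U γ : Set X} (hU : IsOpen U) (hγ : IsCrossCut U γ) :
    IsOpen (U \ γ) := by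
  obtain ⟨g, hg, -, -, hg0, hg1, rfl, -⟩ := hγ
  rw [hU.frontier_eq] at hg0 hg1
  have hcut : U \ g '' Ioo 0 1 = U \ g '' Icc 0 1 := by
    rw [← Ico_insert_right zero_le_one, ← Ioo_insert_left zero_lt_one, image_insert_eq,
      image_insert_eq, sdiff_insert_of_notMem hg1.2, sdiff_insert_of_notMem hg0.2]
  rw [hcut]
  exact hU.sdiff (isCompact_Icc.image_of_continuousOn hg).isClosed

theorem IsCrossSection.isOpen [T2Space X] [LocallyConnectedSpace X] {U D : Set X}
    (hU : IsOpen U) (hD : IsCrossSection U D) : IsOpen D := by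
  obtain ⟨γ, hγ, x, -, rfl⟩ := hD
  exact (hγ.isOpen_diff hU).connectedComponentIn

theorem IsCrossSection.subset {U D : Set X} (hD : IsCrossSection U D) : D ⊆ U := by
  obtain ⟨γ, -, x, -, rfl⟩ := hD
  exact (connectedComponentIn_subset _ _).trans sdiff_subset

section InvariantMeasure

open MeasureTheory

variable [MeasurableSpace X] [BorelSpace X] {μ : Measure X} {f : X ≃ₜ X}

theorem Homeomorph.measurePreserving_toEquiv_zpow (hf : MeasurePreserving f μ μ) (k : ℤ) :
    MeasurePreserving ⇑(f.toEquiv ^ k) μ μ :=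
  Equiv.Perm.measurePreserving_zpow hf (hf.symm f.toMeasurableEquiv) k

theorem finite_setOf_disjoint_iterZ (hf : MeasurePreserving f μ μ) {U A K : Set X}
    (hU : ⇑f '' U = U) (hAU : A ⊆ U) (hA : MeasurableSet A) (hA0 : μ A ≠ 0)
    (hUK : μ (U \ K) ≠ ⊤) {m : ℤ} (hwand : ∀ k : ℤ, k ≠ 0 → iterZ f (m * k) A ∩ A = ∅) :
    {k : ℤ | Disjoint (iterZ f (m * k) A) K}.Finite := by
  have hmeas (k : ℤ) : MeasurableSet (iterZ f (m * k) A) := by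
    rw [iterZ_eq_preimage]
    exact (Homeomorph.measurePreserving_toEquiv_zpow hf _).measurable hA
  have hμ (k : ℤ) : μ (iterZ f (m * k) A) = μ A := by
    rw [iterZ_eq_preimage]
    exact (Homeomorph.measurePreserving_toEquiv_zpow hf _).measure_preimage hA.nullMeasurableSet
  refine (Measure.finite_const_le_meas_of_disjoint_iUnion (μ.restrict (U \ K))
    (pos_iff_ne_zero.2 hA0) hmeas (pairwise_disjoint_iterZ_mul hwand) ?_).subset ?_
  · refine ne_top_of_le_ne_top hUK ?_
    exact (measure_mono (subset_univ _)).trans_eq (Measure.restrict_apply_univ _)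
  · intro k hk
    have hsub : iterZ f (m * k) A ⊆ U \ K :=
      subset_sdiff.2 ⟨iterZ_subset_of_image_eq hU hAU _, hk⟩
    rw [mem_ofPred_eq, Measure.restrict_eq_self _ hsub, hμ]

end InvariantMeasure

theorem bd_nonwandering_of_finite_invariant_measure_general
    {X : Type*} [TopologicalSpace X] [T2Space X]
    [ChartedSpace (EuclideanSpace ℝ (Fin 2)) X] [MeasurableSpace X] [BorelSpace X]
    (f : X ≃ₜ X) (U : Set X) (hUopen : IsOpen U)
    (hUinv : ⇑f '' U = U)
    (K : Set X) (hK : IsCompact K) (hKU : K ⊆ U)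
    (μ : MeasureTheory.Measure X)
    (hinv : ∀ A : Set X, MeasurableSet A → μ (⇑f ⁻¹' A) = μ A)
    (hfin : μ (U \ K) < ⊤)
    (hpos : ∀ D : Set X, IsCrossSection U D → 0 < μ D) :
    BdNonwandering f U := by
  have := ChartedSpace.locallyConnectedSpace (EuclideanSpace ℝ (Fin 2)) X
  have hf : MeasureTheory.MeasurePreserving f μ μ :=
    ⟨f.continuous.measurable, MeasureTheory.Measure.ext fun A hA => by
      rw [MeasureTheory.Measure.map_apply f.continuous.measurable hA, hinv A hA]⟩
  intro n _
  refine ⟨K, hK, hKU, fun D ⟨hD, hwand⟩ => ?_⟩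
  have hfinite := finite_setOf_disjoint_iterZ hf hUinv hD.subset
    (hD.isOpen hUopen).measurableSet (hpos D hD).ne' hfin.ne hwand
  obtain ⟨kpos, hkpos, hkposK⟩ := ((Ioi_infinite 0).sdiff hfinite).nonempty
  obtain ⟨kneg, hkneg, hknegK⟩ := ((Iio_infinite 0).sdiff hfinite).nonempty
  exact ⟨⟨kpos, hkpos, not_disjoint_iff_nonempty_inter.1 hkposK⟩,
    ⟨kneg, hkneg, not_disjoint_iff_nonempty_inter.1 hknegK⟩⟩

/-- If there are a compact `K ⊆ U` and an `f`-invariant Borel measure `μ`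
with `μ(U ∖ K) < ∞` giving positive measure to every cross-section of `U`, then `f` is
∂-nonwandering in `U`. -/
theorem bd_nonwandering_of_finite_invariant_measure
    {X : Type*} [TopologicalSpace X] [T2Space X] [ConnectedSpace X]
    [ChartedSpace (EuclideanSpace ℝ (Fin 2)) X] [MeasurableSpace X] [BorelSpace X]
    (f : X ≃ₜ X) (U : Set X) (hUopen : IsOpen U) (hUsc : SimplyConnectedSpace ↥U)
    (hUinv : ⇑f '' U = U) (hUcompl : Set.Nontrivial Uᶜ)
    (K : Set X) (hK : IsCompact K) (hKU : K ⊆ U)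
    (μ : MeasureTheory.Measure X)
    (hinv : ∀ A : Set X, MeasurableSet A → μ (⇑f ⁻¹' A) = μ A)
    (hfin : μ (U \ K) < ⊤)
    (hpos : ∀ D : Set X, IsCrossSection U D → 0 < μ D) :
    BdNonwandering f U :=
  bd_nonwandering_of_finite_invariant_measure_general f U hUopen hUinv K hK hKU μ hinv hfin hpos

end
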